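/- arXiv:2510.18679 — 8 statements merged into one kernel-verified Lean document; each statement's English description precedes it below -/
import Mathlib

section
/- Let Λ₁, Λ₂ be finite hypergraphs with incidence matrices A₁, A₂ and magic unitaries P_V, P_E over a unital *-algebra. If the sums condition holds (for all v₁∈V₁, e₂∈E₂: Σ_{e₁∋v₁} p_{e₁,e₂} = Σ_{v₂∈e₂} p_{v₁,v₂}), then p_{v₁,v₂}·p_{e₁,e₂} = 0 and p_{e₁,e₂}·p_{v₁,v₂} = 0 whenever (v₁∉e₁ and v₂∈e₂) or (v₁∈e₁ and v₂∉e₂). -/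
/-- A magic unitary over a unital *-algebra: a matrix of self-adjoint idempotents
whose rows and columns sum to 1, with orthogonal rows and columns. -/
structure IsMagicUnitary {A : Type*} [Ring A] [StarRing A] {X Y : Type*}
    [Fintype X] [Fintype Y] (u : Matrix X Y A) : Prop where
  selfAdjoint : ∀ i j, star (u i j) = u i j
  idem : ∀ i j, u i j * u i j = u i j
  row_sum : ∀ i, ∑ j, u i j = 1
  col_sum : ∀ j, ∑ i, u i j = 1
  row_orth : ∀ i j j', j ≠ j' → u i j * u i j' = 0
  col_orth : ∀ j i i', i ≠ i' → u i j * u i' j = 0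

/-- The incidence matrix of a hypergraph given by its membership relation. -/
def incMat (A : Type*) [Ring A] {V E : Type*} (mem : V → E → Prop)
    [∀ v e, Decidable (mem v e)] : Matrix V E A :=
  Matrix.of fun v e => if mem v e then 1 else 0

/-
Write `S` for the common value of the two sides of the sums condition at `(v₁, e₂)`. As a sum over
one row of `P_V` it fixes `p_{v₁,v₂}` on both sides when `v₂ ∈ e₂`, and kills it when `v₂ ∉ e₂`;
as a sum over one column of `P_E` it does the same to `p_{e₁,e₂}` according to whether `v₁ ∈ e₁`.
If `x = x S = S x` and `S y = y S = 0`, then `x y = x S y = 0` and `y x = y S x = 0`.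
-/

namespace OrthogonalIdempotents

variable {R I : Type*} [Semiring R] {e : I → R}

lemma sum_mul_of_mem (he : OrthogonalIdempotents e) {i : I} {s : Finset I} (h : i ∈ s) :
    (∑ j ∈ s, e j) * e i = e i := by
  classical
  simp [Finset.sum_mul, he.mul_eq, h]

lemma sum_mul_of_notMem (he : OrthogonalIdempotents e) {i : I} {s : Finset I} (h : i ∉ s) :
    (∑ j ∈ s, e j) * e i = 0 := by
  classical
  simp [Finset.sum_mul, he.mul_eq, h]

end OrthogonalIdempotents

namespace IsMagicUnitary

variable {A X Y : Type*} [Ring A] [StarRing A] [Fintype X] [Fintype Y] {u : Matrix X Y A}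

lemma orthogonalIdempotents_row (hu : IsMagicUnitary u) (i : X) : OrthogonalIdempotents (u i) :=
  ⟨hu.idem i, hu.row_orth i⟩

lemma orthogonalIdempotents_col (hu : IsMagicUnitary u) (j : Y) :
    OrthogonalIdempotents (u · j) :=
  ⟨(hu.idem · j), hu.col_orth j⟩

end IsMagicUnitary

lemma mul_eq_zero_and_mul_eq_zero_of_absorbs {R : Type*} [SemigroupWithZero R] {x y s : R}
    (hxs : x * s = x) (hsx : s * x = x) (hsy : s * y = 0) (hys : y * s = 0) :
    x * y = 0 ∧ y * x = 0 :=
  ⟨by rw [← hxs, mul_assoc, hsy, mul_zero], by rw [← hsx, ← mul_assoc, hys, zero_mul]⟩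


theorem stmt1 {A : Type*} [Ring A] [StarRing A]
    {V₁ E₁ V₂ E₂ : Type*} [Fintype V₁] [Fintype E₁] [Fintype V₂] [Fintype E₂]
    (mem₁ : V₁ → E₁ → Prop) [∀ v e, Decidable (mem₁ v e)]
    (mem₂ : V₂ → E₂ → Prop) [∀ v e, Decidable (mem₂ v e)]
    (P_V : Matrix V₁ V₂ A) (P_E : Matrix E₁ E₂ A)
    (hV : IsMagicUnitary P_V) (hE : IsMagicUnitary P_E)
    (hsum : ∀ (v₁ : V₁) (e₂ : E₂),
      ∑ e₁ ∈ Finset.univ.filter (fun e₁ => mem₁ v₁ e₁), P_E e₁ e₂ =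
        ∑ v₂ ∈ Finset.univ.filter (fun v₂ => mem₂ v₂ e₂), P_V v₁ v₂) :
    ∀ (v₁ : V₁) (e₁ : E₁) (v₂ : V₂) (e₂ : E₂),
      ((¬ mem₁ v₁ e₁ ∧ mem₂ v₂ e₂) ∨ (mem₁ v₁ e₁ ∧ ¬ mem₂ v₂ e₂)) →
        P_V v₁ v₂ * P_E e₁ e₂ = 0 ∧ P_E e₁ e₂ * P_V v₁ v₂ = 0 := by
  intro v₁ e₁ v₂ e₂ h
  have hS := hsum v₁ e₂
  have hrow := hV.orthogonalIdempotents_row v₁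
  have hcol := hE.orthogonalIdempotents_col e₂
  rcases h with ⟨hv₁e₁, hv₂e₂⟩ | ⟨hv₁e₁, hv₂e₂⟩
  · replace hv₁e₁ : e₁ ∉ Finset.univ.filter (mem₁ v₁ ·) := by simpa using hv₁e₁
    replace hv₂e₂ : v₂ ∈ Finset.univ.filter (mem₂ · e₂) := by simpa using hv₂e₂
    exact mul_eq_zero_and_mul_eq_zero_of_absorbs (hrow.mul_sum_of_mem hv₂e₂)
      (hrow.sum_mul_of_mem hv₂e₂) (hS ▸ hcol.sum_mul_of_notMem hv₁e₁)
      (hS ▸ hcol.mul_sum_of_notMem hv₁e₁)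
  · replace hv₁e₁ : e₁ ∈ Finset.univ.filter (mem₁ v₁ ·) := by simpa using hv₁e₁
    replace hv₂e₂ : v₂ ∉ Finset.univ.filter (mem₂ · e₂) := by simpa using hv₂e₂
    exact (mul_eq_zero_and_mul_eq_zero_of_absorbs (hcol.mul_sum_of_mem hv₁e₁)
      (hcol.sum_mul_of_mem hv₁e₁) (hS ▸ hrow.sum_mul_of_notMem hv₂e₂)
      (hS ▸ hrow.mul_sum_of_notMem hv₂e₂)).symm
end

section
/- Let Λ₁, Λ₂ be finite hypergraphs with incidence matrices A₁, A₂, and suppose magic unitaries P_V, P_E over a unital *-algebra satisfy A₁·P_E = P_V·A₂. Then D₁·P_V = P_V·D₂, where Dᵢ = diag(deg_i(v))_{v∈Vᵢ} is the diagonal degree matrix with deg_i(v) = |{e∈Eᵢ : v∈e}|. In particular, p_{v₁,v₂} = 0 unless deg₁(v₁) = deg₂(v₂). -/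
/-! Sum the intertwining relation `A₁ P_E = P_V A₂` over the edges at row `v₁`. On the left,
the rows of `P_E` sum to `1`, leaving `deg₁ v₁`. On the right, after multiplying on the left by
`p = P_V v₁ v₂`, the orthogonality of the projections in row `v₁` of `P_V` kills every term except
`p · deg₂ v₂`. Hence `p · deg₁ v₁ = p · deg₂ v₂`, and over a `ℂ`-algebra distinct degrees
force `p = 0`. -/

open Finset

theorem Matrix.sum_mul_apply_of_row_sum_eq_one {R X Y Z : Type*} [Semiring R] [Fintype Y]
    [Fintype Z] (B : Matrix X Y R) {M : Matrix Y Z R} (hM : ∀ y, ∑ z, M y z = 1) (x : X) :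
    ∑ z, (B * M) x z = ∑ y, B x y := by
  simp only [Matrix.mul_apply]
  rw [sum_comm]
  simp only [← mul_sum, hM, mul_one]

theorem IsMagicUnitary.apply_mul_mul_apply {A X Y Z : Type*} [Ring A] [StarRing A]
    [Fintype X] [Fintype Y] {u : Matrix X Y A} (hu : IsMagicUnitary u) (B : Matrix Y Z A)
    (i : X) (j : Y) (k : Z) : u i j * (u * B) i k = u i j * B j k := by
  rw [Matrix.mul_apply, mul_sum, sum_eq_single j]
  · rw [← mul_assoc, hu.idem]
  · intro j' _ hj'
    rw [← mul_assoc, hu.row_orth i j j' (Ne.symm hj'), zero_mul]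
  · simp

theorem eq_zero_of_mul_natCast_eq_mul_natCast (K : Type*) {A : Type*} [Field K] [CharZero K]
    [Ring A] [Algebra K A] {a : A} {m n : ℕ} (hmn : m ≠ n) (h : a * m = a * n) : a = 0 := by
  have hunit : IsUnit ((m : A) - n) := by
    have hK : ((m : K) - n) ≠ 0 := sub_ne_zero.mpr (Nat.cast_injective.ne hmn)
    simpa using (IsUnit.mk0 _ hK).map (algebraMap K A)
  rw [← sub_eq_zero, ← mul_sub] at h
  exact hunit.mul_left_eq_zero.mp h

namespace Hypergraph

variable {A V E : Type*} [Fintype E] (mem : V → E → Prop) [∀ v e, Decidable (mem v e)]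

def degree (v : V) : ℕ := #{e | mem v e}

theorem sum_incMat_apply [Ring A] (v : V) : ∑ e, incMat A mem v e = degree mem v := by
  simp [incMat, degree, sum_boole]

end Hypergraph

theorem IsMagicUnitary.mul_degree_eq_mul_degree {A V₁ E₁ V₂ E₂ : Type*} [Ring A] [StarRing A]
    [Fintype V₁] [Fintype E₁] [Fintype V₂] [Fintype E₂] {mem₁ : V₁ → E₁ → Prop}
    [∀ v e, Decidable (mem₁ v e)] {mem₂ : V₂ → E₂ → Prop} [∀ v e, Decidable (mem₂ v e)]
    {P_V : Matrix V₁ V₂ A} {P_E : Matrix E₁ E₂ A} (hV : IsMagicUnitary P_V)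
    (hE : IsMagicUnitary P_E) (hint : incMat A mem₁ * P_E = P_V * incMat A mem₂)
    (v₁ : V₁) (v₂ : V₂) :
    P_V v₁ v₂ * Hypergraph.degree mem₁ v₁ = P_V v₁ v₂ * Hypergraph.degree mem₂ v₂ := by
  open Hypergraph in
  calc P_V v₁ v₂ * degree mem₁ v₁
      = P_V v₁ v₂ * ∑ e, (incMat A mem₁ * P_E) v₁ e := by
        rw [Matrix.sum_mul_apply_of_row_sum_eq_one _ hE.row_sum, sum_incMat_apply]
    _ = ∑ e, P_V v₁ v₂ * (P_V * incMat A mem₂) v₁ e := by rw [hint, mul_sum]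
    _ = ∑ e, P_V v₁ v₂ * incMat A mem₂ v₂ e := by simp only [hV.apply_mul_mul_apply]
    _ = P_V v₁ v₂ * degree mem₂ v₂ := by rw [← mul_sum, sum_incMat_apply]

theorem stmt5 {A : Type*} [Ring A] [StarRing A] [Algebra ℂ A]
    {V₁ E₁ V₂ E₂ : Type*} [Fintype V₁] [Fintype E₁] [Fintype V₂] [Fintype E₂]
    [DecidableEq V₁] [DecidableEq V₂]
    (mem₁ : V₁ → E₁ → Prop) [∀ v e, Decidable (mem₁ v e)]
    (mem₂ : V₂ → E₂ → Prop) [∀ v e, Decidable (mem₂ v e)]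
    (P_V : Matrix V₁ V₂ A) (P_E : Matrix E₁ E₂ A)
    (hV : IsMagicUnitary P_V) (hE : IsMagicUnitary P_E)
    (hint : incMat A mem₁ * P_E = P_V * incMat A mem₂) :
    Matrix.diagonal (fun v₁ : V₁ =>
        ((Finset.univ.filter (fun e₁ => mem₁ v₁ e₁)).card : A)) * P_V =
      P_V * Matrix.diagonal (fun v₂ : V₂ =>
        ((Finset.univ.filter (fun e₂ => mem₂ v₂ e₂)).card : A)) ∧
    ∀ (v₁ : V₁) (v₂ : V₂),
      (Finset.univ.filter (fun e₁ => mem₁ v₁ e₁)).card ≠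
        (Finset.univ.filter (fun e₂ => mem₂ v₂ e₂)).card → P_V v₁ v₂ = 0 := by
  have key := hV.mul_degree_eq_mul_degree hE hint
  refine ⟨?_, fun v₁ v₂ hne => eq_zero_of_mul_natCast_eq_mul_natCast ℂ hne (key v₁ v₂)⟩
  ext v₁ v₂
  rw [Matrix.diagonal_mul, Matrix.mul_diagonal, Nat.cast_comm]
  exact key v₁ v₂
end

section
/- Let G₁, G₂ be finite simple graphs and let P_V=(p_{v₁,v₂}), P_E=(p_{e₁,e₂}) be magic unitaries over a unital *-algebra satisfying the incidence intertwining A₁·P_E = P_V·A₂ (with Aᵢ the vertex-edge incidence matrix of Gᵢ). Then for every edge e₁={v₁,w₁}∈E₁ and e₂={v₂,w₂}∈E₂ one has p_{e₁,e₂} = p_{v₁,v₂}p_{w₁,w₂} + p_{v₁,w₂}p_{w₁,v₂}, and consequently p_{v₁,v₂}p_{w₁,w₂} = p_{w₁,w₂}p_{v₁,v₂} whenever v₁∼_{G₁}w₁ and v₂∼_{G₂}w₂. -/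
open Finset

section Incidence

variable {A V E : Type*} [Ring A] {mem : V → E → Prop} [∀ v e, Decidable (mem v e)]

theorem incMat_mul_apply [Fintype E] {W : Type*} (P : Matrix E W A) (v : V) (w : W) :
    (incMat A mem * P) v w = ∑ e with mem v e, P e w := by
  simp [incMat, Matrix.mul_apply, ite_mul, sum_filter]

theorem mul_incMat_apply [Fintype V] {W : Type*} (P : Matrix W V A) (w : W) (e : E) :
    (P * incMat A mem) w e = ∑ v with mem v e, P w v := by
  simp [incMat, Matrix.mul_apply, mul_ite, sum_filter]

end Incidence

theorem mem_iff_eq_or_eq_of_mem {V E : Type*} {mem : V → E → Prop} {e : E} {a b v w : V}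
    (he : ∀ u, mem u e ↔ (u = a ∨ u = b)) (hvw : v ≠ w) (hv : mem v e) (hw : mem w e) :
    ∀ u, mem u e ↔ (u = v ∨ u = w) := by
  rcases (he v).1 hv with rfl | rfl <;> rcases (he w).1 hw with rfl | rfl <;>
    first | exact absurd rfl hvw | exact fun u => (he u).trans (by tauto)

theorem IsMagicUnitary.sum_col_mul_sum_col {A X Y : Type*} [Ring A] [StarRing A]
    [Fintype X] [Fintype Y] [DecidableEq X] {u : Matrix X Y A} (hu : IsMagicUnitary u)
    (j : Y) (s t : Finset X) :
    (∑ i ∈ s, u i j) * (∑ i ∈ t, u i j) = ∑ i ∈ s ∩ t, u i j := by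
  have hrow : ∀ i, u i j * ∑ i' ∈ t, u i' j = if i ∈ t then u i j else 0 := by
    intro i
    rw [mul_sum]
    split_ifs with hi
    · rw [sum_eq_single_of_mem i hi fun i' _ hi' => hu.col_orth j i i' hi'.symm,
        hu.idem]
    · exact sum_eq_zero fun i' hi' => hu.col_orth j i i' (ne_of_mem_of_not_mem hi' hi).symm
  simp_rw [sum_mul, hrow, sum_ite_mem]

theorem IsMagicUnitary.edge_entry_eq {A V₁ E₁ V₂ E₂ : Type*} [Ring A] [StarRing A]
    [Fintype V₁] [Fintype E₁] [Fintype V₂] [Fintype E₂]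
    {mem₁ : V₁ → E₁ → Prop} [∀ v e, Decidable (mem₁ v e)]
    {mem₂ : V₂ → E₂ → Prop} [∀ v e, Decidable (mem₂ v e)]
    (hsimp₁ : ∀ e₁, ∃ v w, v ≠ w ∧ ∀ u, mem₁ u e₁ ↔ (u = v ∨ u = w))
    (hinj₁ : ∀ e e', (∀ v, mem₁ v e ↔ mem₁ v e') → e = e')
    {P_V : Matrix V₁ V₂ A} {P_E : Matrix E₁ E₂ A}
    (hV : IsMagicUnitary P_V) (hE : IsMagicUnitary P_E)
    (hint : incMat A mem₁ * P_E = P_V * incMat A mem₂)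
    {e₁ : E₁} {v₁ w₁ : V₁} {e₂ : E₂} {v₂ w₂ : V₂}
    (hne₁ : v₁ ≠ w₁) (he₁ : ∀ u, mem₁ u e₁ ↔ (u = v₁ ∨ u = w₁))
    (hne₂ : v₂ ≠ w₂) (he₂ : ∀ u, mem₂ u e₂ ↔ (u = v₂ ∨ u = w₂)) :
    P_E e₁ e₂ = P_V v₁ v₂ * P_V w₁ w₂ + P_V v₁ w₂ * P_V w₁ v₂ := by
  classical
  have hsum : ∀ x, ∑ e with mem₁ x e, P_E e e₂ = P_V x v₂ + P_V x w₂ := by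
    intro x
    have hends : ({v | mem₂ v e₂} : Finset V₂) = {v₂, w₂} := by ext; simp [he₂]
    rw [← incMat_mul_apply, hint, mul_incMat_apply, hends, sum_pair hne₂]
  have hcommon : ({e | mem₁ v₁ e} : Finset E₁) ∩ ({e | mem₁ w₁ e} : Finset E₁) = {e₁} := by
    ext e
    simp only [mem_inter, mem_filter, mem_univ, true_and, mem_singleton]
    constructor
    · rintro ⟨hv, hw⟩
      obtain ⟨_, _, -, he⟩ := hsimp₁ e
      exact hinj₁ e e₁ fun u => (mem_iff_eq_or_eq_of_mem he hne₁ hv hw u).trans (he₁ u).symm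
    · rintro rfl
      exact ⟨(he₁ v₁).2 (.inl rfl), (he₁ w₁).2 (.inr rfl)⟩
  calc P_E e₁ e₂ = (∑ e with mem₁ v₁ e, P_E e e₂) * ∑ e with mem₁ w₁ e, P_E e e₂ := by
        rw [hE.sum_col_mul_sum_col, hcommon, sum_singleton]
    _ = (P_V v₁ v₂ + P_V v₁ w₂) * (P_V w₁ v₂ + P_V w₁ w₂) := by rw [hsum, hsum]
    _ = P_V v₁ v₂ * P_V w₁ w₂ + P_V v₁ w₂ * P_V w₁ v₂ := by
        rw [add_mul, mul_add, mul_add, hV.col_orth v₂ v₁ w₁ hne₁, hV.col_orth w₂ v₁ w₁ hne₁,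
          zero_add, add_zero]

theorem Commute.of_mul_add_mul_eq {R : Type*} [Ring R] {a b c d : R} (ha : IsIdempotentElem a)
    (hac : a * c = 0) (hca : c * a = 0) (had : a * d = 0) (hda : d * a = 0)
    (h : a * b + c * d = b * a + d * c) : Commute a b := by
  have hleft : a * b = a * b * a := by
    simpa [mul_add, ← mul_assoc, ha.eq, hac, had] using congrArg (a * ·) h
  have hright : a * b * a = b * a := by
    simpa [add_mul, mul_assoc, ha.eq, hca, hda] using congrArg (· * a) h
  exact hleft.trans hright

theorem stmt8_general {A : Type*} [Ring A] [StarRing A]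
    {V₁ E₁ V₂ E₂ : Type*} [Fintype V₁] [Fintype E₁] [Fintype V₂] [Fintype E₂]
    (mem₁ : V₁ → E₁ → Prop) [∀ v e, Decidable (mem₁ v e)]
    (mem₂ : V₂ → E₂ → Prop) [∀ v e, Decidable (mem₂ v e)]
    -- each hypergraph is a simple graph: every edge has exactly two distinct vertices
    (hsimp₁ : ∀ e₁, ∃ v w, v ≠ w ∧ ∀ u, mem₁ u e₁ ↔ (u = v ∨ u = w))
    (hsimp₂ : ∀ e₂, ∃ v w, v ≠ w ∧ ∀ u, mem₂ u e₂ ↔ (u = v ∨ u = w))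
    -- no parallel edges: edges are determined by their vertex sets
    (hinj₁ : ∀ e e', (∀ v, mem₁ v e ↔ mem₁ v e') → e = e')
    (P_V : Matrix V₁ V₂ A) (P_E : Matrix E₁ E₂ A)
    (hV : IsMagicUnitary P_V) (hE : IsMagicUnitary P_E)
    (hint : incMat A mem₁ * P_E = P_V * incMat A mem₂) :
    (∀ (e₁ : E₁) (v₁ w₁ : V₁) (e₂ : E₂) (v₂ w₂ : V₂),
      v₁ ≠ w₁ → (∀ u, mem₁ u e₁ ↔ (u = v₁ ∨ u = w₁)) →
      v₂ ≠ w₂ → (∀ u, mem₂ u e₂ ↔ (u = v₂ ∨ u = w₂)) →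
        P_E e₁ e₂ = P_V v₁ v₂ * P_V w₁ w₂ + P_V v₁ w₂ * P_V w₁ v₂) ∧
    (∀ (v₁ w₁ : V₁) (v₂ w₂ : V₂),
      (v₁ ≠ w₁ ∧ ∃ e₁, mem₁ v₁ e₁ ∧ mem₁ w₁ e₁) →
      (v₂ ≠ w₂ ∧ ∃ e₂, mem₂ v₂ e₂ ∧ mem₂ w₂ e₂) →
        P_V v₁ v₂ * P_V w₁ w₂ = P_V w₁ w₂ * P_V v₁ v₂) := by
  refine ⟨fun e₁ v₁ w₁ e₂ v₂ w₂ => hV.edge_entry_eq hsimp₁ hinj₁ hE hint, ?_⟩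
  rintro v₁ w₁ v₂ w₂ ⟨hne₁, e₁, hv₁, hw₁⟩ ⟨hne₂, e₂, hv₂, hw₂⟩
  obtain ⟨_, _, -, hends₁⟩ := hsimp₁ e₁
  obtain ⟨_, _, -, hends₂⟩ := hsimp₂ e₂
  have he₁ := mem_iff_eq_or_eq_of_mem hends₁ hne₁ hv₁ hw₁
  have he₁' := mem_iff_eq_or_eq_of_mem hends₁ hne₁.symm hw₁ hv₁
  have he₂ := mem_iff_eq_or_eq_of_mem hends₂ hne₂ hv₂ hw₂
  have he₂' := mem_iff_eq_or_eq_of_mem hends₂ hne₂.symm hw₂ hv₂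
  refine Commute.of_mul_add_mul_eq (c := P_V v₁ w₂) (d := P_V w₁ v₂) (hV.idem v₁ v₂)
    (hV.row_orth v₁ v₂ w₂ hne₂) (hV.row_orth v₁ w₂ v₂ hne₂.symm)
    (hV.col_orth v₂ v₁ w₁ hne₁) (hV.col_orth v₂ w₁ v₁ hne₁.symm) ?_
  -- both sides are p_{e₁, e₂}, computed from the two orientations of e₁ and e₂
  exact (hV.edge_entry_eq hsimp₁ hinj₁ hE hint hne₁ he₁ hne₂ he₂).symm.trans
    (hV.edge_entry_eq hsimp₁ hinj₁ hE hint hne₁.symm he₁' hne₂.symm he₂')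

theorem stmt8 {A : Type*} [Ring A] [StarRing A]
    {V₁ E₁ V₂ E₂ : Type*} [Fintype V₁] [Fintype E₁] [Fintype V₂] [Fintype E₂]
    (mem₁ : V₁ → E₁ → Prop) [∀ v e, Decidable (mem₁ v e)]
    (mem₂ : V₂ → E₂ → Prop) [∀ v e, Decidable (mem₂ v e)]
    -- each hypergraph is a simple graph: every edge has exactly two distinct vertices
    (hsimp₁ : ∀ e₁, ∃ v w, v ≠ w ∧ ∀ u, mem₁ u e₁ ↔ (u = v ∨ u = w))
    (hsimp₂ : ∀ e₂, ∃ v w, v ≠ w ∧ ∀ u, mem₂ u e₂ ↔ (u = v ∨ u = w))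
    -- no parallel edges: edges are determined by their vertex sets
    (hinj₁ : ∀ e e', (∀ v, mem₁ v e ↔ mem₁ v e') → e = e')
    (hinj₂ : ∀ e e', (∀ v, mem₂ v e ↔ mem₂ v e') → e = e')
    (P_V : Matrix V₁ V₂ A) (P_E : Matrix E₁ E₂ A)
    (hV : IsMagicUnitary P_V) (hE : IsMagicUnitary P_E)
    (hint : incMat A mem₁ * P_E = P_V * incMat A mem₂) :
    (∀ (e₁ : E₁) (v₁ w₁ : V₁) (e₂ : E₂) (v₂ w₂ : V₂),
      v₁ ≠ w₁ → (∀ u, mem₁ u e₁ ↔ (u = v₁ ∨ u = w₁)) →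
      v₂ ≠ w₂ → (∀ u, mem₂ u e₂ ↔ (u = v₂ ∨ u = w₂)) →
        P_E e₁ e₂ = P_V v₁ v₂ * P_V w₁ w₂ + P_V v₁ w₂ * P_V w₁ v₂) ∧
    (∀ (v₁ w₁ : V₁) (v₂ w₂ : V₂),
      (v₁ ≠ w₁ ∧ ∃ e₁, mem₁ v₁ e₁ ∧ mem₁ w₁ e₁) →
      (v₂ ≠ w₂ ∧ ∃ e₂, mem₂ v₂ e₂ ∧ mem₂ w₂ e₂) →
        P_V v₁ v₂ * P_V w₁ w₂ = P_V w₁ w₂ * P_V v₁ v₂) :=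
  stmt8_general mem₁ mem₂ hsimp₁ hsimp₂ hinj₁ P_V P_E hV hE hint
end

section
/- Let G₁, G₂ be finite simple graphs. If U=(u_{v₁,v₂}) is a magic unitary over a unital *-algebra satisfying A^{G₁}·U = U·A^{G₂} (adjacency intertwining) and u_{v₁,v₂}u_{w₁,w₂} = u_{w₁,w₂}u_{v₁,v₂} whenever v₁∼_{G₁}w₁ and v₂∼_{G₂}w₂, then the matrix P_E with entries p_{{v₁,w₁},{v₂,w₂}} := u_{v₁,v₂}u_{w₁,w₂} + u_{v₁,w₂}u_{w₁,v₂} (for edges {v₁,w₁}∈E₁, {v₂,w₂}∈E₂) is a magic unitary and satisfies the incidence intertwining A₁·P_E = U·A₂. -/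
/-- The adjacency matrix of a hypergraph whose edges are 2-element sets:
distinct vertices are adjacent when they share an edge. -/
noncomputable def adjMat (A : Type*) [Ring A] {V E : Type*} [Fintype E]
    (mem : V → E → Prop) : Matrix V V A :=
  Matrix.of fun v w =>
    haveI := Classical.propDecidable (v ≠ w ∧ ∃ e, mem v e ∧ mem w e)
    if v ≠ w ∧ ∃ e, mem v e ∧ mem w e then 1 else 0

open Finset
open scoped Matrix

section Endpoints

variable {V E : Type*} {mem : V → E → Prop} {p q : E → V}

def adjGraph (mem : V → E → Prop) : SimpleGraph V where
  Adj v w := v ≠ w ∧ ∃ e, mem v e ∧ mem w e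
  symm := ⟨fun _ _ ⟨hvw, e, hv, hw⟩ => ⟨hvw.symm, e, hw, hv⟩⟩
  loopless := ⟨fun _ h => h.1 rfl⟩

theorem adjGraph_adj {v w : V} : (adjGraph mem).Adj v w ↔ v ≠ w ∧ ∃ e, mem v e ∧ mem w e :=
  Iff.rfl

def IsEndpoints (mem : V → E → Prop) (p q : E → V) : Prop :=
  ∀ e, p e ≠ q e ∧ ∀ u, mem u e ↔ u = p e ∨ u = q e

theorem IsEndpoints.mem_iff (h : IsEndpoints mem p q) (u : V) (e : E) :
    mem u e ↔ u ∈ s(p e, q e) := by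
  rw [Sym2.mem_iff]
  exact (h e).2 u

theorem IsEndpoints.adj (h : IsEndpoints mem p q) (e : E) : (adjGraph mem).Adj (p e) (q e) :=
  adjGraph_adj.2 ⟨(h e).1, e, (h.mem_iff _ e).2 (Sym2.mem_mk_left _ _),
    (h.mem_iff _ e).2 (Sym2.mem_mk_right _ _)⟩

theorem IsEndpoints.sym2_eq (h : IsEndpoints mem p q) {e : E} {v w : V}
    (hvw : ∀ u, mem u e ↔ u = v ∨ u = w) : s(v, w) = s(p e, q e) :=
  Sym2.ext fun u => by rw [Sym2.mem_iff, ← hvw, h.mem_iff]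

theorem IsEndpoints.injective_sym2 (h : IsEndpoints mem p q)
    (hinj : ∀ e e', (∀ v, mem v e ↔ mem v e') → e = e') :
    Function.Injective fun e => s(p e, q e) :=
  fun e e' hee' => hinj e e' fun u => by simp only [h.mem_iff] at hee' ⊢; rw [hee']

theorem IsEndpoints.sum_sum_eq_sum [Fintype V] [Fintype E] {M : Type*} [AddCommMonoid M]
    (h : IsEndpoints mem p q) (hinj : ∀ e e', (∀ v, mem v e ↔ mem v e') → e = e')
    (f : V → V → M) (hf : ∀ x y, ¬(adjGraph mem).Adj x y → f x y = 0) :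
    ∑ x, ∑ y, f x y = ∑ e, (f (p e) (q e) + f (q e) (p e)) := by
  let orient : E × Bool → V × V := fun eb => if eb.2 then (p eb.1, q eb.1) else (q eb.1, p eb.1)
  have orient_injective : Function.Injective orient := by
    rintro ⟨e, b⟩ ⟨e', b'⟩ hee'
    have hs : s(p e, q e) = s(p e', q e') := by
      cases b <;> cases b' <;> simp_all [orient, Sym2.eq_swap]
    obtain rfl := h.injective_sym2 hinj hs
    cases b <;> cases b' <;> simp_all [orient, (h e).1]
  have adj_mem_range : ∀ x y, (adjGraph mem).Adj x y → (x, y) ∈ Set.range orient := by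
    rintro x y ⟨hxy, e, hx, hy⟩
    rw [(h e).2] at hx hy
    rcases hx with rfl | rfl <;> rcases hy with rfl | rfl
    exacts [absurd rfl hxy, ⟨(e, true), rfl⟩, ⟨(e, false), rfl⟩, absurd rfl hxy]
  symm
  calc ∑ e, (f (p e) (q e) + f (q e) (p e))
      = ∑ eb : E × Bool, f (orient eb).1 (orient eb).2 := by
        simp [Fintype.sum_prod_type, orient]
    _ = ∑ xy : V × V, f xy.1 xy.2 :=
        sum_of_injOn orient orient_injective.injOn (fun _ _ => by simp)
          (fun xy _ hxy => hf _ _ fun hadj => hxy (by simpa using adj_mem_range _ _ hadj))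
          fun _ _ => rfl
    _ = ∑ x, ∑ y, f x y := Fintype.sum_prod_type _

theorem IsEndpoints.ite_mem [DecidableEq V] [∀ v e, Decidable (mem v e)] {M : Type*}
    [AddMonoid M] (h : IsEndpoints mem p q) (v : V) (e : E) (c : M) :
    (if mem v e then c else 0) = (if p e = v then c else 0) + (if q e = v then c else 0) := by
  by_cases hp : p e = v
  · subst hp
    simp [(h e).1.symm, (h.mem_iff _ e).2 (Sym2.mem_mk_left _ _)]
  · by_cases hq : q e = v
    · subst hq
      simp [hp, (h.mem_iff _ e).2 (Sym2.mem_mk_right _ _)]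
    · simp [hp, hq, (h e).2, Ne.symm hp, Ne.symm hq]

theorem IsEndpoints.sum_ite_mem [Fintype V] [∀ v e, Decidable (mem v e)] {M : Type*}
    [AddCommMonoid M] (h : IsEndpoints mem p q) (e : E) (g : V → M) :
    ∑ u, (if mem u e then g u else 0) = g (p e) + g (q e) := by
  classical
  rw [← sum_filter, show univ.filter (mem · e) = {p e, q e} by ext; simp [(h e).2],
    sum_pair (h e).1]

end Endpoints

section Algebra

variable {A : Type*} [Ring A] {V₁ V₂ : Type*}

theorem adjMat_apply_of_adj {E : Type*} [Fintype E] {mem : V₁ → E → Prop} {v w : V₁}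
    (h : (adjGraph mem).Adj v w) : adjMat A mem v w = 1 :=
  if_pos h

theorem adjMat_apply_of_not_adj {E : Type*} [Fintype E] {mem : V₁ → E → Prop} {v w : V₁}
    (h : ¬(adjGraph mem).Adj v w) : adjMat A mem v w = 0 :=
  if_neg h

/-- What `A₁ U = U A₂` and the commutation hypothesis say entrywise about a magic unitary `U`.
Unlike the intertwining relation, this is invariant under transposing `U` and exchanging the
graphs. -/
structure AdjCompatible (G₁ : SimpleGraph V₁) (G₂ : SimpleGraph V₂) (U : Matrix V₁ V₂ A) :
    Prop where
  mul_eq_zero_of_adj_of_not_adj {a b : V₁} {x y : V₂} :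
    G₁.Adj a b → ¬G₂.Adj x y → U a x * U b y = 0
  mul_eq_zero_of_not_adj_of_adj {a b : V₁} {x y : V₂} :
    ¬G₁.Adj a b → G₂.Adj x y → U a x * U b y = 0
  commute {a b : V₁} {x y : V₂} : G₁.Adj a b → G₂.Adj x y → Commute (U a x) (U b y)

variable {G₁ : SimpleGraph V₁} {G₂ : SimpleGraph V₂} {U : Matrix V₁ V₂ A}

theorem AdjCompatible.transpose (hC : AdjCompatible G₁ G₂ U) : AdjCompatible G₂ G₁ Uᵀ where
  mul_eq_zero_of_adj_of_not_adj hxy hab := hC.mul_eq_zero_of_not_adj_of_adj hab hxy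
  mul_eq_zero_of_not_adj_of_adj hxy hab := hC.mul_eq_zero_of_adj_of_not_adj hab hxy
  commute hxy hab := hC.commute hab hxy

def pairProd (U : Matrix V₁ V₂ A) (v w : V₁) (x y : V₂) : A :=
  U v x * U w y + U v y * U w x

theorem pairProd_swap_right (U : Matrix V₁ V₂ A) (v w : V₁) (x y : V₂) :
    pairProd U v w y x = pairProd U v w x y :=
  add_comm _ _

theorem AdjCompatible.pairProd_swap_left (hC : AdjCompatible G₁ G₂ U) {v w : V₁} {x y : V₂}
    (hvw : G₁.Adj v w) (hxy : G₂.Adj x y) : pairProd U w v x y = pairProd U v w x y := by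
  rw [pairProd, pairProd, (hC.commute hvw hxy).eq, (hC.commute hvw hxy.symm).eq, add_comm]

theorem AdjCompatible.pairProd_congr (hC : AdjCompatible G₁ G₂ U) {v w v' w' : V₁}
    {x y x' y' : V₂} (hvw : G₁.Adj v w) (hxy : G₂.Adj x y) (h₁ : s(v, w) = s(v', w'))
    (h₂ : s(x, y) = s(x', y')) : pairProd U v w x y = pairProd U v' w' x' y' := by
  obtain ⟨rfl, rfl⟩ | ⟨rfl, rfl⟩ := Sym2.eq_iff.1 h₁ <;>
    obtain ⟨rfl, rfl⟩ | ⟨rfl, rfl⟩ := Sym2.eq_iff.1 h₂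
  · rfl
  · exact (pairProd_swap_right U _ _ _ _).symm
  · exact (hC.pairProd_swap_left hvw hxy).symm
  · rw [pairProd_swap_right U w v, hC.pairProd_swap_left hvw hxy]

theorem AdjCompatible.pairProd_transpose (hC : AdjCompatible G₁ G₂ U) {v w : V₁} {x y : V₂}
    (hvw : G₁.Adj v w) (hxy : G₂.Adj x y) : pairProd Uᵀ x y v w = pairProd U v w x y := by
  rw [pairProd, pairProd, Matrix.transpose_apply, Matrix.transpose_apply, Matrix.transpose_apply,
    Matrix.transpose_apply, (hC.commute hvw hxy.symm).eq]

def edgeMatrix {E₁ E₂ : Type*} (U : Matrix V₁ V₂ A) (p₁ q₁ : E₁ → V₁) (p₂ q₂ : E₂ → V₂) :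
    Matrix E₁ E₂ A :=
  Matrix.of fun e₁ e₂ => pairProd U (p₁ e₁) (q₁ e₁) (p₂ e₂) (q₂ e₂)

end Algebra

section MagicUnitary

variable {A : Type*} [Ring A] [StarRing A] {V₁ V₂ : Type*} [Fintype V₁] [Fintype V₂]
  {U : Matrix V₁ V₂ A}

theorem IsMagicUnitary.transpose (hU : IsMagicUnitary U) : IsMagicUnitary Uᵀ where
  selfAdjoint i j := hU.selfAdjoint j i
  idem i j := hU.idem j i
  row_sum := hU.col_sum
  col_sum := hU.row_sum
  row_orth := hU.col_orth
  col_orth := hU.row_orth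

theorem IsMagicUnitary.mul_mul_eq_of_mul_eq_mul (hU : IsMagicUnitary U) {M₁ : Matrix V₁ V₁ A}
    {M₂ : Matrix V₂ V₂ A} (h : M₁ * U = U * M₂) (a b : V₁) (x y : V₂) :
    U a x * M₁ a b * U b y = U a x * M₂ x y * U b y := by
  have left : U a x * (M₁ * U) a y * U b y = U a x * M₁ a b * U b y := by
    rw [Matrix.mul_apply, mul_sum, sum_mul, sum_eq_single b]
    · rw [← mul_assoc, mul_assoc _ (U b y), hU.idem]
    · intro c _ hcb
      rw [← mul_assoc, mul_assoc _ (U c y), hU.col_orth y c b hcb, mul_zero]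
    · simp
  have right : U a x * (U * M₂) a y * U b y = U a x * M₂ x y * U b y := by
    rw [Matrix.mul_apply, mul_sum, sum_mul, sum_eq_single x]
    · rw [← mul_assoc, hU.idem]
    · intro z _ hzx
      rw [← mul_assoc, hU.row_orth a x z hzx.symm, zero_mul, zero_mul]
    · simp
  rw [← left, h, right]

theorem IsMagicUnitary.adjCompatible {E₁ E₂ : Type*} [Fintype E₁] [Fintype E₂]
    {mem₁ : V₁ → E₁ → Prop} {mem₂ : V₂ → E₂ → Prop} (hU : IsMagicUnitary U)
    (hadj : adjMat A mem₁ * U = U * adjMat A mem₂)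
    (hcomm : ∀ a b x y, (adjGraph mem₁).Adj a b → (adjGraph mem₂).Adj x y →
      U a x * U b y = U b y * U a x) :
    AdjCompatible (adjGraph mem₁) (adjGraph mem₂) U where
  mul_eq_zero_of_adj_of_not_adj {a b x y} hab hxy := by
    simpa [adjMat_apply_of_adj hab, adjMat_apply_of_not_adj hxy]
      using hU.mul_mul_eq_of_mul_eq_mul hadj a b x y
  mul_eq_zero_of_not_adj_of_adj {a b x y} hab hxy := by
    simpa [adjMat_apply_of_not_adj hab, adjMat_apply_of_adj hxy]
      using (hU.mul_mul_eq_of_mul_eq_mul hadj a b x y).symm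
  commute hab hxy := hcomm _ _ _ _ hab hxy

variable {G₁ : SimpleGraph V₁} {G₂ : SimpleGraph V₂}

theorem AdjCompatible.mul_mul_mul_eq_zero (hC : AdjCompatible G₁ G₂ U) (hU : IsMagicUnitary U)
    {v w : V₁} {x y x' y' : V₂} (hvw : G₁.Adj v w) (hne : (x, y) ≠ (x', y')) :
    U v x * U w y * (U v x' * U w y') = 0 := by
  by_cases hyx' : G₂.Adj y x'
  · rw [(hC.commute hvw.symm hyx').mul_mul_mul_comm]
    by_cases hxx' : x = x'
    · subst hxx'
      rw [hU.row_orth w y y' fun hyy' => hne (by rw [hyy']), mul_zero]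
    · rw [hU.row_orth v x x' hxx', zero_mul]
  · rw [mul_assoc, ← mul_assoc (U w y), hC.mul_eq_zero_of_adj_of_not_adj hvw.symm hyx', zero_mul,
      mul_zero]

theorem AdjCompatible.isSelfAdjoint_pairProd (hC : AdjCompatible G₁ G₂ U)
    (hU : IsMagicUnitary U) {v w : V₁} {x y : V₂} (hvw : G₁.Adj v w) (hxy : G₂.Adj x y) :
    IsSelfAdjoint (pairProd U v w x y) :=
  ((IsSelfAdjoint.commute_iff (hU.selfAdjoint v x) (hU.selfAdjoint w y)).1
    (hC.commute hvw hxy)).add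
  ((IsSelfAdjoint.commute_iff (hU.selfAdjoint v y) (hU.selfAdjoint w x)).1
    (hC.commute hvw hxy.symm))

theorem AdjCompatible.isIdempotentElem_pairProd (hC : AdjCompatible G₁ G₂ U)
    (hU : IsMagicUnitary U) {v w : V₁} {x y : V₂} (hvw : G₁.Adj v w) (hxy : G₂.Adj x y) :
    IsIdempotentElem (pairProd U v w x y) := by
  have hne : (x, y) ≠ (y, x) := fun h => hxy.ne (Prod.ext_iff.1 h).1
  refine IsIdempotentElem.add
    (.mul_of_commute (hC.commute hvw hxy) (hU.idem v x) (hU.idem w y))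
    (.mul_of_commute (hC.commute hvw hxy.symm) (hU.idem v y) (hU.idem w x)) ?_
  rw [hC.mul_mul_mul_eq_zero hU hvw hne, hC.mul_mul_mul_eq_zero hU hvw hne.symm, add_zero]

theorem AdjCompatible.pairProd_mul_pairProd_eq_zero (hC : AdjCompatible G₁ G₂ U)
    (hU : IsMagicUnitary U) {v w : V₁} {x y x' y' : V₂} (hvw : G₁.Adj v w)
    (hne : s(x, y) ≠ s(x', y')) : pairProd U v w x y * pairProd U v w x' y' = 0 := by
  have hne' : ∀ {a b c d : V₂}, s(a, b) = s(x, y) → s(c, d) = s(x', y') → (a, b) ≠ (c, d) := by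
    rintro a b c d hab hcd ⟨⟩
    exact hne (hab.symm.trans hcd)
  rw [pairProd, pairProd, add_mul, mul_add, mul_add,
    hC.mul_mul_mul_eq_zero hU hvw (hne' rfl rfl),
    hC.mul_mul_mul_eq_zero hU hvw (hne' rfl Sym2.eq_swap),
    hC.mul_mul_mul_eq_zero hU hvw (hne' Sym2.eq_swap rfl),
    hC.mul_mul_mul_eq_zero hU hvw (hne' Sym2.eq_swap Sym2.eq_swap), add_zero, add_zero]

theorem IsMagicUnitary.sum_pairProd (hU : IsMagicUnitary U) (v : V₁) (x y : V₂) :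
    ∑ w, pairProd U v w x y = U v x + U v y := by
  simp only [pairProd, sum_add_distrib, ← mul_sum, hU.col_sum, mul_one]

variable {E₁ E₂ : Type*} [Fintype E₁] {mem₁ : V₁ → E₁ → Prop} {mem₂ : V₂ → E₂ → Prop}
  {p₁ q₁ : E₁ → V₁} {p₂ q₂ : E₂ → V₂}

theorem AdjCompatible.sum_pairProd_endpoints [Fintype E₂] (hC : AdjCompatible G₁ (adjGraph mem₂) U)
    (hU : IsMagicUnitary U) (h₂ : IsEndpoints mem₂ p₂ q₂)
    (hinj₂ : ∀ e e', (∀ v, mem₂ v e ↔ mem₂ v e') → e = e') {v w : V₁} (hvw : G₁.Adj v w) :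
    ∑ e, pairProd U v w (p₂ e) (q₂ e) = 1 :=
  calc ∑ e, pairProd U v w (p₂ e) (q₂ e) = ∑ x, ∑ y, U v x * U w y :=
        (h₂.sum_sum_eq_sum hinj₂ _ fun _ _ hxy => hC.mul_eq_zero_of_adj_of_not_adj hvw hxy).symm
    _ = 1 := by simp only [← mul_sum, hU.row_sum, mul_one]

theorem isMagicUnitary_edgeMatrix [Fintype E₂] (h₁ : IsEndpoints mem₁ p₁ q₁)
    (h₂ : IsEndpoints mem₂ p₂ q₂)
    (hinj₁ : ∀ e e', (∀ v, mem₁ v e ↔ mem₁ v e') → e = e')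
    (hinj₂ : ∀ e e', (∀ v, mem₂ v e ↔ mem₂ v e') → e = e')
    (hU : IsMagicUnitary U) (hC : AdjCompatible (adjGraph mem₁) (adjGraph mem₂) U) :
    IsMagicUnitary (edgeMatrix U p₁ q₁ p₂ q₂) := by
  have transpose_apply :
      ∀ e₁ e₂, edgeMatrix Uᵀ p₂ q₂ p₁ q₁ e₂ e₁ = edgeMatrix U p₁ q₁ p₂ q₂ e₁ e₂ :=
    fun e₁ e₂ => hC.pairProd_transpose (h₁.adj e₁) (h₂.adj e₂)
  refine
    { selfAdjoint := fun e₁ e₂ => hC.isSelfAdjoint_pairProd hU (h₁.adj e₁) (h₂.adj e₂)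
      idem := fun e₁ e₂ => hC.isIdempotentElem_pairProd hU (h₁.adj e₁) (h₂.adj e₂)
      row_sum := fun e₁ => hC.sum_pairProd_endpoints hU h₂ hinj₂ (h₁.adj e₁)
      col_sum := fun e₂ => ?_
      row_orth := fun e₁ e₂ e₂' hne =>
        hC.pairProd_mul_pairProd_eq_zero hU (h₁.adj e₁) ((h₂.injective_sym2 hinj₂).ne hne)
      col_orth := fun e₂ e₁ e₁' hne => ?_ }
  · simp only [← transpose_apply]
    exact hC.transpose.sum_pairProd_endpoints hU.transpose h₁ hinj₁ (h₂.adj e₂)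
  · rw [← transpose_apply, ← transpose_apply]
    exact hC.transpose.pairProd_mul_pairProd_eq_zero hU.transpose (h₂.adj e₂)
      ((h₁.injective_sym2 hinj₁).ne hne)

theorem incMat_mul_edgeMatrix [∀ v e, Decidable (mem₁ v e)] [∀ v e, Decidable (mem₂ v e)]
    (h₁ : IsEndpoints mem₁ p₁ q₁) (h₂ : IsEndpoints mem₂ p₂ q₂)
    (hinj₁ : ∀ e e', (∀ v, mem₁ v e ↔ mem₁ v e') → e = e')
    (hU : IsMagicUnitary U) (hC : AdjCompatible (adjGraph mem₁) (adjGraph mem₂) U) :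
    incMat A mem₁ * edgeMatrix U p₁ q₁ p₂ q₂ = U * incMat A mem₂ := by
  classical
  ext v e₂
  let f : V₁ → V₁ → A := fun a b => if a = v then pairProd U a b (p₂ e₂) (q₂ e₂) else 0
  have hf : ∀ a b, ¬(adjGraph mem₁).Adj a b → f a b = 0 := fun a b hab => by
    simp only [f, pairProd, hC.mul_eq_zero_of_not_adj_of_adj hab (h₂.adj e₂),
      hC.mul_eq_zero_of_not_adj_of_adj hab (h₂.adj e₂).symm, add_zero, ite_self]
  calc (incMat A mem₁ * edgeMatrix U p₁ q₁ p₂ q₂) v e₂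
      = ∑ e₁, if mem₁ v e₁ then edgeMatrix U p₁ q₁ p₂ q₂ e₁ e₂ else 0 := by
        simp [Matrix.mul_apply, incMat]
    _ = ∑ e₁, (f (p₁ e₁) (q₁ e₁) + f (q₁ e₁) (p₁ e₁)) := by
        refine sum_congr rfl fun e₁ _ => ?_
        rw [h₁.ite_mem]
        simp only [f, hC.pairProd_swap_left (h₁.adj e₁) (h₂.adj e₂)]
        rfl
    _ = ∑ a, ∑ b, f a b := (h₁.sum_sum_eq_sum hinj₁ f hf).symm
    _ = U v (p₂ e₂) + U v (q₂ e₂) := by simp [f, hU.sum_pairProd]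
    _ = (U * incMat A mem₂) v e₂ := by simp [Matrix.mul_apply, incMat, h₂.sum_ite_mem]

end MagicUnitary

theorem stmt9 {A : Type*} [Ring A] [StarRing A]
    {V₁ E₁ V₂ E₂ : Type*} [Fintype V₁] [Fintype E₁] [Fintype V₂] [Fintype E₂]
    (mem₁ : V₁ → E₁ → Prop) [∀ v e, Decidable (mem₁ v e)]
    (mem₂ : V₂ → E₂ → Prop) [∀ v e, Decidable (mem₂ v e)]
    (hsimp₁ : ∀ e₁, ∃ v w, v ≠ w ∧ ∀ u, mem₁ u e₁ ↔ (u = v ∨ u = w))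
    (hsimp₂ : ∀ e₂, ∃ v w, v ≠ w ∧ ∀ u, mem₂ u e₂ ↔ (u = v ∨ u = w))
    (hinj₁ : ∀ e e', (∀ v, mem₁ v e ↔ mem₁ v e') → e = e')
    (hinj₂ : ∀ e e', (∀ v, mem₂ v e ↔ mem₂ v e') → e = e')
    (U : Matrix V₁ V₂ A) (hU : IsMagicUnitary U)
    (hadj : adjMat A mem₁ * U = U * adjMat A mem₂)
    (hcomm : ∀ (v₁ w₁ : V₁) (v₂ w₂ : V₂),
      (v₁ ≠ w₁ ∧ ∃ e₁, mem₁ v₁ e₁ ∧ mem₁ w₁ e₁) →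
      (v₂ ≠ w₂ ∧ ∃ e₂, mem₂ v₂ e₂ ∧ mem₂ w₂ e₂) →
        U v₁ v₂ * U w₁ w₂ = U w₁ w₂ * U v₁ v₂) :
    ∃ P_E : Matrix E₁ E₂ A,
      IsMagicUnitary P_E ∧
      incMat A mem₁ * P_E = U * incMat A mem₂ ∧
      ∀ (e₁ : E₁) (v₁ w₁ : V₁) (e₂ : E₂) (v₂ w₂ : V₂),
        v₁ ≠ w₁ → (∀ u, mem₁ u e₁ ↔ (u = v₁ ∨ u = w₁)) →
        v₂ ≠ w₂ → (∀ u, mem₂ u e₂ ↔ (u = v₂ ∨ u = w₂)) →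
          P_E e₁ e₂ = U v₁ v₂ * U w₁ w₂ + U v₁ w₂ * U w₁ v₂ := by
  choose p₁ q₁ h₁ using hsimp₁
  choose p₂ q₂ h₂ using hsimp₂
  have hC := hU.adjCompatible hadj hcomm
  refine ⟨edgeMatrix U p₁ q₁ p₂ q₂, isMagicUnitary_edgeMatrix h₁ h₂ hinj₁ hinj₂ hU hC,
    incMat_mul_edgeMatrix h₁ h₂ hinj₁ hU hC, ?_⟩
  intro e₁ v₁ w₁ e₂ v₂ w₂ _ he₁ _ he₂
  exact hC.pairProd_congr (IsEndpoints.adj h₁ e₁) (IsEndpoints.adj h₂ e₂)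
    (IsEndpoints.sym2_eq h₁ he₁).symm (IsEndpoints.sym2_eq h₂ he₂).symm
end

section
/- Let G₁, G₂ be finite simple graphs, and suppose P_V, P_E are magic unitaries over a unital *-algebra satisfying A₁·P_E = P_V·A₂ (incidence intertwining), with P_V, P_E unitary. Then P_V satisfies the adjacency intertwining A^{G₁}·P_V = P_V·A^{G₂}. -/
open Matrix

/-!
Both Gram matrices of the incidence matrices split as `Aᵢ Aᵢᴴ = A^{Gᵢ} + Dᵢ`. Conjugating the
incidence intertwining `A₁ P_E = P_V A₂` with the unitarity of `P_E` and `P_V` gives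
`A₁ A₁ᴴ P_V = P_V A₂ A₂ᴴ`. Applying the incidence intertwining to the all-ones vector, which `P_E`
fixes, gives `d₁ = P_V d₂` for the degree vectors, and orthogonality of the projections in a row
of `P_V` upgrades this to `D₁ P_V = P_V D₂`. Subtracting the two intertwinings proves the claim.
-/

open Finset

section Hypergraph

variable {V E : Type*} (mem : V → E → Prop)

lemma mem_iff_of_mem_of_mem
    (hsimp : ∀ e, ∃ v w, v ≠ w ∧ ∀ u, mem u e ↔ (u = v ∨ u = w))
    {v w : V} (hvw : v ≠ w) {e : E} (hv : mem v e) (hw : mem w e) (u : V) :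
    mem u e ↔ (u = v ∨ u = w) := by
  obtain ⟨a, b, -, hab⟩ := hsimp e
  rw [hab] at hv hw ⊢
  rcases hv with rfl | rfl <;> rcases hw with rfl | rfl <;> tauto

lemma edge_eq_of_mem_of_mem
    (hsimp : ∀ e, ∃ v w, v ≠ w ∧ ∀ u, mem u e ↔ (u = v ∨ u = w))
    (hinj : ∀ e e', (∀ v, mem v e ↔ mem v e') → e = e')
    {v w : V} (hvw : v ≠ w) {e e' : E} (hv : mem v e) (hw : mem w e)
    (hv' : mem v e') (hw' : mem w e') : e = e' :=
  hinj e e' fun u => (mem_iff_of_mem_of_mem mem hsimp hvw hv hw u).trans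
    (mem_iff_of_mem_of_mem mem hsimp hvw hv' hw' u).symm

variable [Fintype E] [∀ v e, Decidable (mem v e)] {A : Type*} [Ring A]

def incDeg (v : V) : ℕ := #{e | mem v e}

lemma incMat_mulVec_one : incMat A mem *ᵥ 1 = fun v => (incDeg mem v : A) := by
  ext v
  simp [mulVec, dotProduct, incMat, incDeg]

lemma incMat_mul_conjTranspose_apply [StarRing A] (v w : V) :
    (incMat A mem * (incMat A mem)ᴴ) v w = (#{e | mem v e ∧ mem w e} : A) := by
  simp [mul_apply, incMat, apply_ite star, ← ite_and, and_comm]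

lemma incMat_mul_conjTranspose [StarRing A] [DecidableEq V]
    (hlin : ∀ v w, v ≠ w → ∀ e e', mem v e → mem w e → mem v e' → mem w e' → e = e') :
    incMat A mem * (incMat A mem)ᴴ = adjMat A mem + diagonal fun v => (incDeg mem v : A) := by
  ext v w
  rw [incMat_mul_conjTranspose_apply, Matrix.add_apply, adjMat, of_apply]
  by_cases hvw : v = w
  · subst hvw
    simp [incDeg]
  rw [diagonal_apply_ne _ hvw, add_zero]
  by_cases hex : ∃ e, mem v e ∧ mem w e
  · obtain ⟨e, he⟩ := hex
    have hcard : #{e | mem v e ∧ mem w e} = 1 := card_eq_one.2 ⟨e, by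
      ext e'
      simp only [mem_filter, mem_univ, true_and, mem_singleton]
      exact ⟨fun he' => hlin v w hvw e' e he'.1 he'.2 he.1 he.2, fun h => h ▸ he⟩⟩
    rw [hcard, if_pos ⟨hvw, e, he⟩, Nat.cast_one]
  · rw [if_neg fun h => hex h.2, filter_false_of_mem fun e _ he => hex ⟨e, he⟩, card_empty,
      Nat.cast_zero]

end Hypergraph

section Intertwining

variable {A : Type*} [Ring A] [StarRing A] {X Y : Type*} [Fintype X] [Fintype Y]

lemma IsMagicUnitary.mulVec_one {u : Matrix X Y A} (hu : IsMagicUnitary u) : u *ᵥ 1 = 1 := by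
  ext i
  simpa [mulVec, dotProduct] using hu.row_sum i

lemma IsMagicUnitary.diagonal_mulVec_natCast_mul [DecidableEq X] [DecidableEq Y]
    {u : Matrix X Y A} (hu : IsMagicUnitary u) (d : Y → ℕ) :
    diagonal (u *ᵥ fun j => (d j : A)) * u = u * diagonal fun j => (d j : A) := by
  ext i j
  rw [diagonal_mul, mul_diagonal, mulVec, dotProduct, sum_mul, sum_eq_single j]
  · rw [mul_assoc, (Nat.cast_commute _ _).eq, ← mul_assoc, hu.idem]
  · intro k _ hkj
    rw [mul_assoc, (Nat.cast_commute _ _).eq, ← mul_assoc, hu.row_orth i k j hkj, zero_mul]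
  · exact fun h => absurd (mem_univ j) h

lemma mul_conjTranspose_mul_of_mul_eq {Z W : Type*} [Fintype Z] [Fintype W]
    [DecidableEq Y] [DecidableEq Z]
    {B₁ : Matrix X Z A} {B₂ : Matrix Y W A} {P : Matrix X Y A} {Q : Matrix Z W A}
    (hP : Pᴴ * P = 1) (hQ : Q * Qᴴ = 1) (h : B₁ * Q = P * B₂) :
    B₁ * B₁ᴴ * P = P * (B₂ * B₂ᴴ) := by
  have hstar : B₁ᴴ * P = Q * B₂ᴴ :=
    calc B₁ᴴ * P = Q * (B₁ * Q)ᴴ * P := by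
          rw [conjTranspose_mul, ← Matrix.mul_assoc Q, hQ, Matrix.one_mul]
      _ = Q * B₂ᴴ := by
          rw [h, conjTranspose_mul, Matrix.mul_assoc, Matrix.mul_assoc, hP, Matrix.mul_one]
  rw [Matrix.mul_assoc, hstar, ← Matrix.mul_assoc, h, Matrix.mul_assoc]

end Intertwining

theorem stmt10 {A : Type*} [Ring A] [StarRing A]
    {V₁ E₁ V₂ E₂ : Type*} [Fintype V₁] [Fintype E₁] [Fintype V₂] [Fintype E₂]
    [DecidableEq V₁] [DecidableEq V₂] [DecidableEq E₁] [DecidableEq E₂]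
    (mem₁ : V₁ → E₁ → Prop) [∀ v e, Decidable (mem₁ v e)]
    (mem₂ : V₂ → E₂ → Prop) [∀ v e, Decidable (mem₂ v e)]
    (hsimp₁ : ∀ e₁, ∃ v w, v ≠ w ∧ ∀ u, mem₁ u e₁ ↔ (u = v ∨ u = w))
    (hsimp₂ : ∀ e₂, ∃ v w, v ≠ w ∧ ∀ u, mem₂ u e₂ ↔ (u = v ∨ u = w))
    (hinj₁ : ∀ e e', (∀ v, mem₁ v e ↔ mem₁ v e') → e = e')
    (hinj₂ : ∀ e e', (∀ v, mem₂ v e ↔ mem₂ v e') → e = e')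
    (P_V : Matrix V₁ V₂ A) (P_E : Matrix E₁ E₂ A)
    (hV : IsMagicUnitary P_V) (hE : IsMagicUnitary P_E)
    (hVu : P_V * P_Vᴴ = 1 ∧ P_Vᴴ * P_V = 1)
    (hEu : P_E * P_Eᴴ = 1 ∧ P_Eᴴ * P_E = 1)
    (hint : incMat A mem₁ * P_E = P_V * incMat A mem₂) :
    adjMat A mem₁ * P_V = P_V * adjMat A mem₂ := by
  set D₁ : Matrix V₁ V₁ A := diagonal fun v => (incDeg mem₁ v : A)
  set D₂ : Matrix V₂ V₂ A := diagonal fun w => (incDeg mem₂ w : A)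
  have hgram₁ := incMat_mul_conjTranspose (A := A) mem₁
    fun _ _ hvw _ _ => edge_eq_of_mem_of_mem mem₁ hsimp₁ hinj₁ hvw
  have hgram₂ := incMat_mul_conjTranspose (A := A) mem₂
    fun _ _ hvw _ _ => edge_eq_of_mem_of_mem mem₂ hsimp₂ hinj₂ hvw
  have hdeg : (fun v => (incDeg mem₁ v : A)) = P_V *ᵥ fun w => (incDeg mem₂ w : A) := by
    rw [← incMat_mulVec_one, ← incMat_mulVec_one, ← hE.mulVec_one, mulVec_mulVec, hint,
      mulVec_mulVec]
  have hD : D₁ * P_V = P_V * D₂ := by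
    simp only [D₁, D₂, hdeg]
    exact hV.diagonal_mulVec_natCast_mul _
  have hG := mul_conjTranspose_mul_of_mul_eq hVu.2 hEu.1 hint
  rw [hgram₁, hgram₂] at hG
  calc adjMat A mem₁ * P_V = (adjMat A mem₁ + D₁) * P_V - D₁ * P_V := by
        rw [Matrix.add_mul, add_sub_cancel_right]
    _ = P_V * (adjMat A mem₂ + D₂) - P_V * D₂ := by rw [hG, hD]
    _ = P_V * adjMat A mem₂ := by rw [Matrix.mul_add, add_sub_cancel_right]
end

section
/- Let X₁,Y₁,X₂,Y₂ be finite sets and let P^U = (p^U_{(x₁,y₁),(x₂,y₂)}) be a magic unitary over a unital *-algebra indexed by (X₁×Y₁)×(X₂×Y₂), satisfying the no-signalling conditions: Σ_{x₁} p^U_{(x₁,y₁),(x₂,y₂)} is independent of x₂, and Σ_{y₁} p^U_{(x₁,y₁),(x₂,y₂)} is independent of y₂. Define p^X_{x₁,x₂} := Σ_{y₁} p^U_{(x₁,y₁),(x₂,y₂)} and p^Y_{y₁,y₂} := Σ_{x₁} p^U_{(x₁,y₁),(x₂,y₂)}. Then for each fixed x₂ (resp. y₂), (p^X_{x₁,x₂})_{x₁}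 and (p^Y_{y₁,y₂})_{y₁} are families of self-adjoint idempotents summing to 1, and p^U_{(x₁,y₁),(x₂,y₂)} = p^X_{x₁,x₂}·p^Y_{y₁,y₂}. -/
theorem IsMagicUnitary.mul_apply_col_eq_ite {A : Type*} [Ring A] [StarRing A] {X Y : Type*}
    [Fintype X] [Fintype Y] [DecidableEq X] {u : Matrix X Y A} (hu : IsMagicUnitary u)
    (j : Y) (i i' : X) : u i j * u i' j = if i = i' then u i j else 0 := by
  split_ifs with h
  · subst h
    exact hu.idem i j
  · exact hu.col_orth j i i' h

section OrthogonalIdempotents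

variable {α β A : Type*} [DecidableEq α] [DecidableEq β] [Semiring A] {e : α × β → A}

theorem sum_fst_fiber_mul_sum_snd_fiber [Fintype α] [Fintype β]
    (he : ∀ i j, e i * e j = if i = j then e i else 0) (x : α) (y : β) :
    (∑ y', e (x, y')) * (∑ x', e (x', y)) = e (x, y) := by
  simp [Finset.sum_mul_sum, he, Prod.ext_iff, ite_and]

theorem sum_fst_fiber_mul_self [Fintype β]
    (he : ∀ i j, e i * e j = if i = j then e i else 0) (x : α) :
    (∑ y, e (x, y)) * (∑ y, e (x, y)) = ∑ y, e (x, y) := by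
  simp [Finset.sum_mul_sum, he, Prod.ext_iff]

theorem sum_snd_fiber_mul_self [Fintype α]
    (he : ∀ i j, e i * e j = if i = j then e i else 0) (y : β) :
    (∑ x, e (x, y)) * (∑ x, e (x, y)) = ∑ x, e (x, y) := by
  simp [Finset.sum_mul_sum, he, Prod.ext_iff]

end OrthogonalIdempotents

theorem stmt13_general {A : Type*} [Ring A] [StarRing A]
    {X₁ Y₁ X₂ Y₂ : Type*} [Fintype X₁] [Fintype Y₁] [Fintype X₂] [Fintype Y₂]
    (PU : Matrix (X₁ × Y₁) (X₂ × Y₂) A) (hPU : IsMagicUnitary PU) :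
    (∀ (x₁ : X₁) (x₂ : X₂) (y₂ : Y₂),
      star (∑ y₁, PU (x₁, y₁) (x₂, y₂)) = ∑ y₁, PU (x₁, y₁) (x₂, y₂) ∧
      (∑ y₁, PU (x₁, y₁) (x₂, y₂)) * (∑ y₁, PU (x₁, y₁) (x₂, y₂)) =
        ∑ y₁, PU (x₁, y₁) (x₂, y₂)) ∧
    (∀ (x₂ : X₂) (y₂ : Y₂), ∑ x₁, ∑ y₁, PU (x₁, y₁) (x₂, y₂) = 1) ∧
    (∀ (y₁ : Y₁) (x₂ : X₂) (y₂ : Y₂),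
      star (∑ x₁, PU (x₁, y₁) (x₂, y₂)) = ∑ x₁, PU (x₁, y₁) (x₂, y₂) ∧
      (∑ x₁, PU (x₁, y₁) (x₂, y₂)) * (∑ x₁, PU (x₁, y₁) (x₂, y₂)) =
        ∑ x₁, PU (x₁, y₁) (x₂, y₂)) ∧
    (∀ (x₂ : X₂) (y₂ : Y₂), ∑ y₁, ∑ x₁, PU (x₁, y₁) (x₂, y₂) = 1) ∧
    (∀ (x₁ : X₁) (y₁ : Y₁) (x₂ : X₂) (y₂ : Y₂),
      PU (x₁, y₁) (x₂, y₂) =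
        (∑ y₁', PU (x₁, y₁') (x₂, y₂)) * (∑ x₁', PU (x₁', y₁) (x₂, y₂))) := by
  classical
  have horth := hPU.mul_apply_col_eq_ite
  refine ⟨fun x₁ x₂ y₂ => ⟨?_, sum_fst_fiber_mul_self (horth _) x₁⟩,
    fun x₂ y₂ => ?_, fun y₁ x₂ y₂ => ⟨?_, sum_snd_fiber_mul_self (horth _) y₁⟩,
    fun x₂ y₂ => ?_,
    fun x₁ y₁ x₂ y₂ => (sum_fst_fiber_mul_sum_snd_fiber (horth _) x₁ y₁).symm⟩
  · simp [star_sum, hPU.selfAdjoint]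
  · exact (Fintype.sum_prod_type fun i => PU i (x₂, y₂)).symm.trans (hPU.col_sum _)
  · simp [star_sum, hPU.selfAdjoint]
  · exact (Fintype.sum_prod_type_right fun i => PU i (x₂, y₂)).symm.trans (hPU.col_sum _)

theorem stmt13 {A : Type*} [Ring A] [StarRing A]
    {X₁ Y₁ X₂ Y₂ : Type*} [Fintype X₁] [Fintype Y₁] [Fintype X₂] [Fintype Y₂]
    (PU : Matrix (X₁ × Y₁) (X₂ × Y₂) A) (hPU : IsMagicUnitary PU)
    -- no-signalling: the sum over x₁ is independent of x₂
    (hNSx : ∀ (y₁ : Y₁) (y₂ : Y₂) (x₂ x₂' : X₂),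
      ∑ x₁, PU (x₁, y₁) (x₂, y₂) = ∑ x₁, PU (x₁, y₁) (x₂', y₂))
    -- no-signalling: the sum over y₁ is independent of y₂
    (hNSy : ∀ (x₁ : X₁) (x₂ : X₂) (y₂ y₂' : Y₂),
      ∑ y₁, PU (x₁, y₁) (x₂, y₂) = ∑ y₁, PU (x₁, y₁) (x₂, y₂')) :
    (∀ (x₁ : X₁) (x₂ : X₂) (y₂ : Y₂),
      star (∑ y₁, PU (x₁, y₁) (x₂, y₂)) = ∑ y₁, PU (x₁, y₁) (x₂, y₂) ∧
      (∑ y₁, PU (x₁, y₁) (x₂, y₂)) * (∑ y₁, PU (x₁, y₁) (x₂, y₂)) =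
        ∑ y₁, PU (x₁, y₁) (x₂, y₂)) ∧
    (∀ (x₂ : X₂) (y₂ : Y₂), ∑ x₁, ∑ y₁, PU (x₁, y₁) (x₂, y₂) = 1) ∧
    (∀ (y₁ : Y₁) (x₂ : X₂) (y₂ : Y₂),
      star (∑ x₁, PU (x₁, y₁) (x₂, y₂)) = ∑ x₁, PU (x₁, y₁) (x₂, y₂) ∧
      (∑ x₁, PU (x₁, y₁) (x₂, y₂)) * (∑ x₁, PU (x₁, y₁) (x₂, y₂)) =
        ∑ x₁, PU (x₁, y₁) (x₂, y₂)) ∧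
    (∀ (x₂ : X₂) (y₂ : Y₂), ∑ y₁, ∑ x₁, PU (x₁, y₁) (x₂, y₂) = 1) ∧
    (∀ (x₁ : X₁) (y₁ : Y₁) (x₂ : X₂) (y₂ : Y₂),
      PU (x₁, y₁) (x₂, y₂) =
        (∑ y₁', PU (x₁, y₁') (x₂, y₂)) * (∑ x₁', PU (x₁', y₁) (x₂, y₂))) :=
  stmt13_general PU hPU
end

section
/- Under the hypotheses of the no-signalling decomposition lemma (P^U a magic unitary over a unital *-algebra on (X₁×Y₁)×(X₂×Y₂) satisfying the no-signalling marginal conditions, with marginals p^X, p^Y defined as partial sums), if additionally |X₁|=|X₂| and |Y₁|=|Y₂| and the *-algebra is a ℂ-algebra, then P_X = (p^X_{x₁,x₂}) and P_Y = (p^Y_{y₁,y₂}) are magic unitaries; in particular Σ_{x₂} p^X_{x₁,x₂} = 1 for each x₁, and p^X_{x₁,x₂}·p^X_{x₁,x₂'} = 0 for x₂ ≠ x₂'. -/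
/-!
Fix the output column `c = (x₂, y₂)`. The entries of column `c` of `P^U` are orthogonal projections
summing to `1`, so the partial sums `p_{x₁} = Σ_{y₁} P^U_{(x₁,y₁),c}` and
`v_{y₁} = Σ_{x₁} P^U_{(x₁,y₁),c}` are projections with `p_{x₁} v_{y₁} = P^U_{(x₁,y₁),c}`.
Orthogonality of a row of `P_X` follows by inserting `1 = Σ_{y₁} v_{y₁}` and using that, by
no-signalling, `v_{y₁}` does not depend on `x₂`. Its row sums are computed by averaging over `y₂`,
again by no-signalling, which yields `|Y₂| • Σ_{x₂} p^X_{x₁,x₂} = |Y₁| • 1`; this is where the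
`ℂ`-algebra structure is needed, to divide by `|Y₂|`. Swapping the roles of `X` and `Y` gives `P_Y`.
-/

open Finset

/-- The paper's `p^X`, computed at the output `y₂`; it is independent of `y₂` under
no-signalling. -/
def Matrix.marginalFst {A X₁ Y₁ X₂ Y₂ : Type*} [AddCommMonoid A] [Fintype Y₁]
    (u : Matrix (X₁ × Y₁) (X₂ × Y₂) A) (y₂ : Y₂) : Matrix X₁ X₂ A :=
  Matrix.of fun x₁ x₂ => ∑ y₁, u (x₁, y₁) (x₂, y₂)

@[simp]
theorem Matrix.marginalFst_apply {A X₁ Y₁ X₂ Y₂ : Type*} [AddCommMonoid A] [Fintype Y₁]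
    (u : Matrix (X₁ × Y₁) (X₂ × Y₂) A) (y₂ : Y₂) (x₁ : X₁) (x₂ : X₂) :
    u.marginalFst y₂ x₁ x₂ = ∑ y₁, u (x₁, y₁) (x₂, y₂) :=
  rfl

namespace IsMagicUnitary

variable {A : Type*} [Ring A] [StarRing A]

theorem reindex {I J I' J' : Type*} [Fintype I] [Fintype J] [Fintype I'] [Fintype J']
    {u : Matrix I J A} (hu : IsMagicUnitary u) (e : I ≃ I') (f : J ≃ J') :
    IsMagicUnitary (Matrix.reindex e f u) where
  selfAdjoint _ _ := hu.selfAdjoint _ _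
  idem _ _ := hu.idem _ _
  row_sum i := (f.symm.sum_comp fun j => u (e.symm i) j).trans (hu.row_sum _)
  col_sum j := (e.symm.sum_comp fun i => u i (f.symm j)).trans (hu.col_sum _)
  row_orth _ _ _ h := hu.row_orth _ _ _ (f.symm.injective.ne h)
  col_orth _ _ _ h := hu.col_orth _ _ _ (e.symm.injective.ne h)

section Column

variable {I J : Type*} [Fintype I] [Fintype J] [DecidableEq I] {u : Matrix I J A}

theorem sum_col_mul_apply (hu : IsMagicUnitary u) (S : Finset I) (i : I) (j : J) :
    (∑ r ∈ S, u r j) * u i j = if i ∈ S then u i j else 0 := by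
  rw [sum_mul]
  split_ifs with hi
  · rw [sum_eq_single_of_mem i hi fun r _ hr => hu.col_orth j r i hr, hu.idem]
  · exact sum_eq_zero fun r hr => hu.col_orth j r i (ne_of_mem_of_not_mem hr hi)

theorem sum_col_mul_sum_col_s14 (hu : IsMagicUnitary u) (S T : Finset I) (j : J) :
    (∑ r ∈ S, u r j) * (∑ r ∈ T, u r j) = ∑ r ∈ T ∩ S, u r j := by
  rw [mul_sum, ← sum_ite_mem]
  exact sum_congr rfl fun i _ => hu.sum_col_mul_apply S i j

end Column

section Product

variable {X₁ Y₁ X₂ Y₂ : Type*} [Fintype X₁] [Fintype Y₁] [Fintype X₂] [Fintype Y₂]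
  {u : Matrix (X₁ × Y₁) (X₂ × Y₂) A}

theorem sum_snd_mul_sum_snd [DecidableEq X₁] [DecidableEq Y₁] (hu : IsMagicUnitary u)
    (x x' : X₁) (c : X₂ × Y₂) :
    (∑ y, u (x, y) c) * (∑ y, u (x', y) c) = if x = x' then ∑ y, u (x, y) c else 0 := by
  have h := hu.sum_col_mul_sum_col_s14 ({x} ×ˢ univ) ({x'} ×ˢ univ) c
  simp only [sum_product, sum_singleton, product_inter_product, inter_self] at h
  rw [h]
  split_ifs with hx
  · simp [hx]
  · simp [singleton_inter_of_notMem (by simpa [eq_comm] using hx : x' ∉ ({x} : Finset X₁))]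

theorem sum_snd_mul_sum_fst [DecidableEq X₁] [DecidableEq Y₁] (hu : IsMagicUnitary u)
    (x : X₁) (y : Y₁) (c : X₂ × Y₂) :
    (∑ y', u (x, y') c) * (∑ x', u (x', y) c) = u (x, y) c := by
  have h := hu.sum_col_mul_sum_col_s14 ({x} ×ˢ univ) (univ ×ˢ {y}) c
  simp only [sum_product, sum_singleton, product_inter_product, univ_inter, inter_univ,
    singleton_product_singleton] at h
  exact h

theorem sum_fst_mul_sum_snd [DecidableEq X₁] [DecidableEq Y₁] (hu : IsMagicUnitary u)
    (x : X₁) (y : Y₁) (c : X₂ × Y₂) :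
    (∑ x', u (x', y) c) * (∑ y', u (x, y') c) = u (x, y) c := by
  have h := hu.sum_col_mul_sum_col_s14 (univ ×ˢ {y}) ({x} ×ˢ univ) c
  simp only [sum_product, sum_singleton, product_inter_product, univ_inter, inter_univ,
    singleton_product_singleton] at h
  exact h

theorem sum_fst_mul_sum_fst_self [DecidableEq X₁] [DecidableEq Y₁] (hu : IsMagicUnitary u)
    (y : Y₁) (c : X₂ × Y₂) :
    (∑ x, u (x, y) c) * (∑ x, u (x, y) c) = ∑ x, u (x, y) c := by
  simpa [sum_product_right] using hu.sum_col_mul_sum_col_s14 (univ ×ˢ {y}) (univ ×ˢ {y}) c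

theorem sum_sum_fst_eq_one (hu : IsMagicUnitary u) (c : X₂ × Y₂) :
    ∑ y, ∑ x, u (x, y) c = 1 :=
  (Fintype.sum_prod_type_right _).symm.trans (hu.col_sum c)

theorem marginalFst_row_orth [DecidableEq X₁] [DecidableEq Y₁] (hu : IsMagicUnitary u)
    (hnsX : ∀ (y₁ : Y₁) (y₂ : Y₂) (x₂ x₂' : X₂),
      ∑ x₁, u (x₁, y₁) (x₂, y₂) = ∑ x₁, u (x₁, y₁) (x₂', y₂))
    (y₂ : Y₂) (x₁ : X₁) {x₂ x₂' : X₂} (hx : x₂ ≠ x₂') :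
    u.marginalFst y₂ x₁ x₂ * u.marginalFst y₂ x₁ x₂' = 0 := by
  rw [Matrix.marginalFst_apply, Matrix.marginalFst_apply]
  set p := ∑ y₁, u (x₁, y₁) (x₂, y₂)
  set p' := ∑ y₁, u (x₁, y₁) (x₂', y₂)
  have hterm : ∀ y₁, p * (∑ x, u (x, y₁) (x₂, y₂)) * p' =
      u (x₁, y₁) (x₂, y₂) * u (x₁, y₁) (x₂', y₂) := fun y₁ => by
    calc p * (∑ x, u (x, y₁) (x₂, y₂)) * p'
        = p * ((∑ x, u (x, y₁) (x₂, y₂)) * (∑ x, u (x, y₁) (x₂, y₂))) * p' := by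
          rw [hu.sum_fst_mul_sum_fst_self]
      _ = (p * ∑ x, u (x, y₁) (x₂, y₂)) * ((∑ x, u (x, y₁) (x₂', y₂)) * p') := by
          rw [← hnsX y₁ y₂ x₂ x₂']; simp only [mul_assoc]
      _ = u (x₁, y₁) (x₂, y₂) * u (x₁, y₁) (x₂', y₂) := by
          rw [hu.sum_snd_mul_sum_fst, hu.sum_fst_mul_sum_snd]
  clear_value p p'
  calc p * p' = p * (∑ y₁, ∑ x, u (x, y₁) (x₂, y₂)) * p' := by
        rw [hu.sum_sum_fst_eq_one, mul_one]
    _ = ∑ y₁, u (x₁, y₁) (x₂, y₂) * u (x₁, y₁) (x₂', y₂) := by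
        rw [mul_sum, sum_mul]; exact sum_congr rfl fun y₁ _ => hterm y₁
    _ = 0 := sum_eq_zero fun y₁ _ => hu.row_orth _ _ _ (by simpa using hx)

theorem marginalFst_row_sum [IsAddTorsionFree A] (hu : IsMagicUnitary u)
    (hY : Fintype.card Y₁ = Fintype.card Y₂)
    (hnsY : ∀ (x₁ : X₁) (x₂ : X₂) (y₂ y₂' : Y₂),
      ∑ y₁, u (x₁, y₁) (x₂, y₂) = ∑ y₁, u (x₁, y₁) (x₂, y₂'))
    (y₂ : Y₂) (x₁ : X₁) :
    ∑ x₂, u.marginalFst y₂ x₁ x₂ = 1 := by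
  simp only [Matrix.marginalFst_apply]
  have : Nonempty Y₂ := ⟨y₂⟩
  apply nsmul_right_injective (Fintype.card_ne_zero : Fintype.card Y₂ ≠ 0)
  calc Fintype.card Y₂ • ∑ x₂, ∑ y₁, u (x₁, y₁) (x₂, y₂)
      = ∑ y₂' : Y₂, ∑ x₂, ∑ y₁, u (x₁, y₁) (x₂, y₂') := by
        simp_rw [hnsY x₁ _ _ y₂]; rw [sum_const, card_univ]
    _ = ∑ y₂' : Y₂, ∑ y₁, ∑ x₂, u (x₁, y₁) (x₂, y₂') := sum_congr rfl fun _ _ => sum_comm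
    _ = ∑ y₁, ∑ c, u (x₁, y₁) c := by rw [sum_comm]; simp only [Fintype.sum_prod_type_right]
    _ = Fintype.card Y₂ • (1 : A) := by simp [hu.row_sum, hY]

theorem isMagicUnitary_marginalFst [IsAddTorsionFree A] (hu : IsMagicUnitary u)
    (hY : Fintype.card Y₁ = Fintype.card Y₂)
    (hnsX : ∀ (y₁ : Y₁) (y₂ : Y₂) (x₂ x₂' : X₂),
      ∑ x₁, u (x₁, y₁) (x₂, y₂) = ∑ x₁, u (x₁, y₁) (x₂', y₂))
    (hnsY : ∀ (x₁ : X₁) (x₂ : X₂) (y₂ y₂' : Y₂),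
      ∑ y₁, u (x₁, y₁) (x₂, y₂) = ∑ y₁, u (x₁, y₁) (x₂, y₂'))
    (y₂ : Y₂) :
    IsMagicUnitary (u.marginalFst y₂) := by
  classical
  refine ⟨fun x₁ x₂ => ?_, fun x₁ x₂ => ?_, hu.marginalFst_row_sum hY hnsY y₂, fun x₂ => ?_,
    fun x₁ _ _ => hu.marginalFst_row_orth hnsX y₂ x₁, fun x₂ x₁ x₁' hx => ?_⟩
  · simp [star_sum, hu.selfAdjoint]
  · simpa using hu.sum_snd_mul_sum_snd x₁ x₁ (x₂, y₂)
  · exact (Fintype.sum_prod_type _).symm.trans (hu.col_sum _)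
  · simpa [hx] using hu.sum_snd_mul_sum_snd x₁ x₁' (x₂, y₂)

end Product

end IsMagicUnitary

theorem stmt14 {A : Type*} [Ring A] [StarRing A] [Algebra ℂ A]
    {X₁ Y₁ X₂ Y₂ : Type*} [Fintype X₁] [Fintype Y₁] [Fintype X₂] [Fintype Y₂]
    (hX : Fintype.card X₁ = Fintype.card X₂) (hY : Fintype.card Y₁ = Fintype.card Y₂)
    (PU : Matrix (X₁ × Y₁) (X₂ × Y₂) A) (hPU : IsMagicUnitary PU)
    (hNSx : ∀ (y₁ : Y₁) (y₂ : Y₂) (x₂ x₂' : X₂),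
      ∑ x₁, PU (x₁, y₁) (x₂, y₂) = ∑ x₁, PU (x₁, y₁) (x₂', y₂))
    (hNSy : ∀ (x₁ : X₁) (x₂ : X₂) (y₂ y₂' : Y₂),
      ∑ y₁, PU (x₁, y₁) (x₂, y₂) = ∑ y₁, PU (x₁, y₁) (x₂, y₂')) :
    (∀ y₂ : Y₂,
      IsMagicUnitary (Matrix.of fun (x₁ : X₁) (x₂ : X₂) => ∑ y₁, PU (x₁, y₁) (x₂, y₂))) ∧
    (∀ x₂ : X₂,
      IsMagicUnitary (Matrix.of fun (y₁ : Y₁) (y₂ : Y₂) => ∑ x₁, PU (x₁, y₁) (x₂, y₂))) := by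
  have : IsAddTorsionFree A := .of_isTorsionFree ℂ A
  have hswap := hPU.reindex (.prodComm X₁ Y₁) (.prodComm X₂ Y₂)
  exact ⟨hPU.isMagicUnitary_marginalFst hY hNSx hNSy,
    hswap.isMagicUnitary_marginalFst hX hNSy hNSx⟩
end

section
/- Let G₁, G₂ be finite simple graphs with no isolated vertices and with all vertex neighborhoods distinct, and let 𝒩(G₁), 𝒩(G₂) be their neighborhood hypergraphs. If U is a magic unitary over a unital *-algebra with A^{G₁}·U = U·A^{G₂}, then setting P_V := U and P_E := C₁*·U·C₂ (where Cᵢ are the permutation matrices identifying vertices with neighborhood-edges), one has A_{𝒩(G₁)}·P_E = P_V·A_{𝒩(G₂)}, and P_E is a magic unitary. -/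
open Matrix

/-!
The matrices `Cᵢ` are the permutation matrices of `εᵢ`, so conjugation by them is reindexing:
`C₁ᴴ U C₂ = U.submatrix ε₁.symm ε₂.symm`. Reindexing preserves the magic unitary axioms, and the
incidence matrix of `𝒩(G)` is `A^G` with its columns reindexed by `ε` (by symmetry of adjacency).
Hence `A_{𝒩(G₁)} P_E` and `U A_{𝒩(G₂)}` are `A^{G₁} U` and `U A^{G₂}` with columns reindexed
by `ε₂`.
-/

theorem IsMagicUnitary.submatrix {A : Type*} [Ring A] [StarRing A] {X Y X' Y' : Type*}
    [Fintype X] [Fintype Y] [Fintype X'] [Fintype Y'] {u : Matrix X Y A}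
    (hu : IsMagicUnitary u) (e : X' ≃ X) (f : Y' ≃ Y) :
    IsMagicUnitary (u.submatrix e f) where
  selfAdjoint i j := hu.selfAdjoint (e i) (f j)
  idem i j := hu.idem (e i) (f j)
  row_sum i := (f.sum_comp (u (e i))).trans (hu.row_sum (e i))
  col_sum j := (e.sum_comp (u · (f j))).trans (hu.col_sum (f j))
  row_orth i j j' h := hu.row_orth (e i) (f j) (f j') (f.injective.ne h)
  col_orth j i i' h := hu.col_orth (f j) (e i) (e i') (e.injective.ne h)

section Permutation

variable {α m n : Type*} [DecidableEq n]

theorem Equiv.of_ite_eq_toPEquiv_toMatrix [Zero α] [One α] (ε : m ≃ n) :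
    (of fun x e => if ε x = e then (1 : α) else 0) = ε.toPEquiv.toMatrix := by
  ext x e
  simp [PEquiv.toMatrix_apply]

theorem Equiv.conjTranspose_toPEquiv_toMatrix [DecidableEq m] [NonAssocSemiring α] [StarRing α]
    (ε : m ≃ n) : (ε.toPEquiv.toMatrix : Matrix m n α)ᴴ = ε.symm.toPEquiv.toMatrix := by
  ext e x
  simp [PEquiv.toMatrix_apply, conjTranspose_apply, apply_ite star, Equiv.eq_symm_apply, eq_comm]

theorem Equiv.toPEquiv_toMatrix_conjTranspose_mul_mul
    [Fintype m] [NonAssocSemiring α] [StarRing α]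
    {m' n' : Type*} [Fintype m'] [DecidableEq n'] (ε : m ≃ n) (ε' : m' ≃ n') (U : Matrix m m' α) :
    (ε.toPEquiv.toMatrix : Matrix m n α)ᴴ * U * (ε'.toPEquiv.toMatrix : Matrix m' n' α) =
      U.submatrix ε.symm ε'.symm := by
  classical
  rw [ε.conjTranspose_toPEquiv_toMatrix, PEquiv.toMatrix_toPEquiv_mul,
    PEquiv.mul_toMatrix_toPEquiv, submatrix_submatrix]
  rfl

end Permutation

theorem incMat_eq_adjMatrix_submatrix (A : Type*) [Ring A] {V E : Type*} {G : SimpleGraph V}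
    [DecidableRel G.Adj] (ε : V ≃ E) {mem : V → E → Prop} [∀ v e, Decidable (mem v e)]
    (hmem : ∀ v x, mem v (ε x) ↔ v ∈ G.neighborSet x) :
    incMat A mem = (G.adjMatrix A).submatrix id ε.symm := by
  ext v e
  have hve : mem v e ↔ G.Adj v (ε.symm e) := by
    simpa [G.adj_comm] using hmem v (ε.symm e)
  simp only [incMat, of_apply, submatrix_apply, id, SimpleGraph.adjMatrix_apply, hve]

theorem stmt18_general {A : Type*} [Ring A] [StarRing A]
    {V₁ V₂ E₁ E₂ : Type*} [Fintype V₁] [Fintype V₂] [Fintype E₁] [Fintype E₂]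
    [DecidableEq E₁] [DecidableEq E₂]
    (G₁ : SimpleGraph V₁) [DecidableRel G₁.Adj]
    (G₂ : SimpleGraph V₂) [DecidableRel G₂.Adj]
    -- the neighborhood hypergraphs, with edges indexed by εᵢ via x ↦ N(x)
    (ε₁ : V₁ ≃ E₁) (memE₁ : V₁ → E₁ → Prop) [∀ v e, Decidable (memE₁ v e)]
    (hmem₁ : ∀ v x : V₁, memE₁ v (ε₁ x) ↔ v ∈ G₁.neighborSet x)
    (ε₂ : V₂ ≃ E₂) (memE₂ : V₂ → E₂ → Prop) [∀ v e, Decidable (memE₂ v e)]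
    (hmem₂ : ∀ v x : V₂, memE₂ v (ε₂ x) ↔ v ∈ G₂.neighborSet x)
    (U : Matrix V₁ V₂ A) (hU : IsMagicUnitary U)
    (hadj : G₁.adjMatrix A * U = U * G₂.adjMatrix A) :
    incMat A memE₁ *
        ((Matrix.of fun (x : V₁) (e : E₁) => if ε₁ x = e then (1 : A) else 0)ᴴ * U *
          Matrix.of fun (x : V₂) (e : E₂) => if ε₂ x = e then (1 : A) else 0) =
      U * incMat A memE₂ ∧
    IsMagicUnitary
      ((Matrix.of fun (x : V₁) (e : E₁) => if ε₁ x = e then (1 : A) else 0)ᴴ * U *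
        Matrix.of fun (x : V₂) (e : E₂) => if ε₂ x = e then (1 : A) else 0) := by
  simp only [ε₁.of_ite_eq_toPEquiv_toMatrix, ε₂.of_ite_eq_toPEquiv_toMatrix,
    ε₁.toPEquiv_toMatrix_conjTranspose_mul_mul]
  refine ⟨?_, hU.submatrix ε₁.symm ε₂.symm⟩
  rw [incMat_eq_adjMatrix_submatrix A ε₁ hmem₁, incMat_eq_adjMatrix_submatrix A ε₂ hmem₂,
    submatrix_mul_equiv, hadj]
  exact submatrix_mul U (G₂.adjMatrix A) id id ε₂.symm Function.bijective_id

theorem stmt18 {A : Type*} [Ring A] [StarRing A]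
    {V₁ V₂ E₁ E₂ : Type*} [Fintype V₁] [Fintype V₂] [Fintype E₁] [Fintype E₂]
    [DecidableEq V₁] [DecidableEq V₂] [DecidableEq E₁] [DecidableEq E₂]
    (G₁ : SimpleGraph V₁) [DecidableRel G₁.Adj]
    (G₂ : SimpleGraph V₂) [DecidableRel G₂.Adj]
    (hniso₁ : ∀ x : V₁, ∃ y : V₁, G₁.Adj y x)
    (hniso₂ : ∀ x : V₂, ∃ y : V₂, G₂.Adj y x)
    (hdist₁ : ∀ x x' : V₁, G₁.neighborSet x = G₁.neighborSet x' → x = x')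
    (hdist₂ : ∀ x x' : V₂, G₂.neighborSet x = G₂.neighborSet x' → x = x')
    -- the neighborhood hypergraphs, with edges indexed by εᵢ via x ↦ N(x)
    (ε₁ : V₁ ≃ E₁) (memE₁ : V₁ → E₁ → Prop) [∀ v e, Decidable (memE₁ v e)]
    (hmem₁ : ∀ v x : V₁, memE₁ v (ε₁ x) ↔ v ∈ G₁.neighborSet x)
    (ε₂ : V₂ ≃ E₂) (memE₂ : V₂ → E₂ → Prop) [∀ v e, Decidable (memE₂ v e)]
    (hmem₂ : ∀ v x : V₂, memE₂ v (ε₂ x) ↔ v ∈ G₂.neighborSet x)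
    (U : Matrix V₁ V₂ A) (hU : IsMagicUnitary U)
    (hadj : G₁.adjMatrix A * U = U * G₂.adjMatrix A) :
    incMat A memE₁ *
        ((Matrix.of fun (x : V₁) (e : E₁) => if ε₁ x = e then (1 : A) else 0)ᴴ * U *
          Matrix.of fun (x : V₂) (e : E₂) => if ε₂ x = e then (1 : A) else 0) =
      U * incMat A memE₂ ∧
    IsMagicUnitary
      ((Matrix.of fun (x : V₁) (e : E₁) => if ε₁ x = e then (1 : A) else 0)ᴴ * U *
        Matrix.of fun (x : V₂) (e : E₂) => if ε₂ x = e then (1 : A) else 0) :=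
  stmt18_general G₁ G₂ ε₁ memE₁ hmem₁ ε₂ memE₂ hmem₂ U hU hadj
end
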